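/- arXiv:math/9911242 — 2 statements merged into one kernel-verified Lean document; each statement's English description precedes it below -/
import Mathlib

section
/- Let A be a k-linear Hom-finite additive category with a right Serre functor F, i.e. an additive functor F : A → A together with isomorphisms η_{A,B} : Hom(A,B) → Hom(B,FA)* natural in A and B (where (−)* denotes k-linear dual). Then F is fully faithful. -/
/-!
Naturality of `η` in both variables identifies `η (F f)` with `η f` up to swapping the two
arguments of the pairing: `η g (F f) = η f g`. Since every `η` is a bijection onto the dual,
this makes `f ↦ F f` injective, and every `u : F X ⟶ F Y` is `F` of the morphism whose
functional is `g ↦ η g u`.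
-/

open CategoryTheory

/-- A right Serre functor on a `k`-linear Hom-finite additive category `A`:
an additive endofunctor `F` together with isomorphisms
`Hom(X,Y) ≅ Hom(Y,FX)*` which are natural in both variables. -/
structure RightSerreFunctor (k : Type) [Field k] (A : Type) [Category A]
    [Preadditive A] [Linear k A] where
  F : A ⥤ A
  additive : F.Additive
  η : ∀ X Y : A, (X ⟶ Y) ≃ₗ[k] Module.Dual k (Y ⟶ F.obj X)
  nat_left : ∀ {X X' Y : A} (f : X' ⟶ X) (h : X ⟶ Y) (g : Y ⟶ F.obj X'),
    η X' Y (f ≫ h) g = η X Y h (g ≫ F.map f)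
  nat_right : ∀ {X Y Y' : A} (h : X ⟶ Y) (g : Y ⟶ Y') (g' : Y' ⟶ F.obj X),
    η X Y' (h ≫ g) g' = η X Y h (g ≫ g')

namespace RightSerreFunctor

variable {k : Type} [Field k] {A : Type} [Category A] [Preadditive A] [Linear k A]
  (S : RightSerreFunctor k A)

theorem η_apply_map {X Y : A} (f : X ⟶ Y) (g : Y ⟶ S.F.obj X) :
    S.η Y (S.F.obj X) g (S.F.map f) = S.η X Y f g := by
  have h_left := S.nat_left f g (𝟙 (S.F.obj X))
  have h_right := S.nat_right f g (𝟙 (S.F.obj X))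
  simp only [Category.id_comp, Category.comp_id] at h_left h_right
  rw [← h_left, h_right]

theorem hom_ext_of_η_apply {W Z : A} {u v : Z ⟶ S.F.obj W}
    (h : ∀ g : W ⟶ Z, S.η W Z g u = S.η W Z g v) : u = v := by
  rw [← sub_eq_zero, ← Module.forall_dual_apply_eq_zero_iff k]
  intro φ
  obtain ⟨g, rfl⟩ := (S.η W Z).surjective φ
  rw [map_sub, h, sub_self]

def preimage {X Y : A} (u : S.F.obj X ⟶ S.F.obj Y) : X ⟶ Y :=
  (S.η X Y).symm ((S.η Y (S.F.obj X)).toLinearMap.flip u)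

theorem map_preimage {X Y : A} (u : S.F.obj X ⟶ S.F.obj Y) : S.F.map (S.preimage u) = u :=
  S.hom_ext_of_η_apply fun g => by
    rw [η_apply_map, preimage, LinearEquiv.apply_symm_apply, LinearMap.flip_apply,
      LinearEquiv.coe_coe]

theorem map_injective {X Y : A} : Function.Injective (S.F.map : (X ⟶ Y) → _) := by
  intro f f' h
  apply (S.η X Y).injective
  ext g
  rw [← η_apply_map, ← S.η_apply_map f', h]

theorem full : S.F.Full := ⟨fun u => ⟨S.preimage u, S.map_preimage u⟩⟩

theorem faithful : S.F.Faithful := ⟨fun h => S.map_injective h⟩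

end RightSerreFunctor

theorem rightSerreFunctor_full_and_faithful_general (k : Type) [Field k] (A : Type)
    [Category A] [Preadditive A] [Linear k A]
    (S : RightSerreFunctor k A) :
    S.F.Full ∧ S.F.Faithful :=
  ⟨S.full, S.faithful⟩

/-- If a `k`-linear Hom-finite additive category has a right Serre functor `F`,
then `F` is fully faithful. -/
theorem rightSerreFunctor_full_and_faithful (k : Type) [Field k] (A : Type)
    [Category A] [Preadditive A] [Linear k A]
    (hfin : ∀ X Y : A, FiniteDimensional k (X ⟶ Y))
    (S : RightSerreFunctor k A) :
    S.F.Full ∧ S.F.Faithful :=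
  rightSerreFunctor_full_and_faithful_general k A S
end

section
/- Let A be a k-linear Hom-finite additive category. Suppose one is given, for each object A, an object F(A) and a k-linear map η_A : Hom(A,FA) → k such that the pairing Hom(A,B) × Hom(B,FA) → k defined by (f,g) ↦ η_A(g∘f) is non-degenerate for all objects A and B. Then F extends uniquely to a functor (with F(f) for f : A → B characterized by η_A(g∘f) = η_B(F(f)∘g) for all g : B → FA), and this functor together with the induced isomorphisms η_{A,B} : Hom(A,B) → Hom(B,FA)*, f ↦ η_A(−∘f), is a right Serre functor. -/
open CategoryTheory

/-!
Non-degeneracy and finite-dimensionality make each pairing `(f, g) ↦ η_X (f ≫ g)` perfect.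
Then `F f : FX ⟶ FY` is the unique morphism representing the functional `g ↦ η_X (f ≫ g)`
through the perfect pairing of `Hom(Y, FX)` with `Hom(FX, FY)`; functoriality, additivity and
naturality of the induced isomorphisms all follow from this uniqueness.
-/

namespace CategoryTheory

variable {k : Type} [Field k] {A : Type} [Category A] [Preadditive A] [Linear k A]
  {Fobj : A → A} (η : ∀ X : A, (X ⟶ Fobj X) →ₗ[k] k)

def serrePairing (X Y : A) : (X ⟶ Y) →ₗ[k] (Y ⟶ Fobj X) →ₗ[k] k :=
  (Linear.comp X Y (Fobj X)).compr₂ (η X)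

@[simp]
lemma serrePairing_apply {X Y : A} (f : X ⟶ Y) (g : Y ⟶ Fobj X) :
    serrePairing η X Y f g = η X (f ≫ g) :=
  rfl

lemma isPerfPair_serrePairing {X Y : A} [FiniteDimensional k (X ⟶ Y)]
    (hnd₁ : ∀ f : X ⟶ Y, f ≠ 0 → ∃ g : Y ⟶ Fobj X, η X (f ≫ g) ≠ 0)
    (hnd₂ : ∀ g : Y ⟶ Fobj X, g ≠ 0 → ∃ f : X ⟶ Y, η X (f ≫ g) ≠ 0) :
    (serrePairing η X Y).IsPerfPair := by
  refine .of_injective ((injective_iff_map_eq_zero _).2 fun f hf => ?_)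
    ((injective_iff_map_eq_zero _).2 fun g hg => ?_)
  · by_contra hne
    obtain ⟨g, hfg⟩ := hnd₁ f hne
    exact hfg (LinearMap.congr_fun hf g)
  · by_contra hne
    obtain ⟨f, hfg⟩ := hnd₂ g hne
    exact hfg (LinearMap.congr_fun hg f)

variable [∀ X Y : A, (serrePairing η X Y).IsPerfPair]

noncomputable def serreMap {X Y : A} (f : X ⟶ Y) : Fobj X ⟶ Fobj Y :=
  (serrePairing η Y (Fobj X)).flip.toPerfPair.symm (serrePairing η X Y f)

lemma trace_comp_serreMap {X Y : A} (f : X ⟶ Y) (g : Y ⟶ Fobj X) :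
    η Y (g ≫ serreMap η f) = η X (f ≫ g) :=
  LinearMap.apply_toPerfPair_flip (serrePairing η Y (Fobj X)) _ g

lemma eq_serreMap {X Y : A} {f : X ⟶ Y} {h : Fobj X ⟶ Fobj Y}
    (hh : ∀ g : Y ⟶ Fobj X, η Y (g ≫ h) = η X (f ≫ g)) : h = serreMap η f :=
  (LinearMap.IsPerfPair.bijective_right (serrePairing η Y (Fobj X))).injective <|
    LinearMap.ext fun g => by simp [hh, trace_comp_serreMap]

lemma serreMap_id (X : A) : serreMap η (𝟙 X) = 𝟙 (Fobj X) :=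
  (eq_serreMap η fun g => by simp).symm

lemma serreMap_comp {X Y Z : A} (f : X ⟶ Y) (f' : Y ⟶ Z) :
    serreMap η (f ≫ f') = serreMap η f ≫ serreMap η f' :=
  (eq_serreMap η fun g => by
    rw [← Category.assoc, trace_comp_serreMap, ← Category.assoc, trace_comp_serreMap,
      Category.assoc]).symm

lemma serreMap_add {X Y : A} (f f' : X ⟶ Y) :
    serreMap η (f + f') = serreMap η f + serreMap η f' :=
  (eq_serreMap η fun g => by
    rw [Preadditive.comp_add, map_add, trace_comp_serreMap, trace_comp_serreMap,
      Preadditive.add_comp, map_add]).symm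

-- Reducible, like `RightSerreFunctor.ofIsPerfPair`, so that `S.F.obj X` is reducibly `Fobj X`
-- and `eqToHom_refl` simplifies the `eqToHom`s of `rightSerreFunctor_of_trace`.
noncomputable abbrev serreFunctor : A ⥤ A where
  obj := Fobj
  map := serreMap η
  map_id := serreMap_id η
  map_comp := serreMap_comp η

instance serreFunctor_additive : (serreFunctor η).Additive where
  map_add := serreMap_add η _ _

noncomputable abbrev _root_.RightSerreFunctor.ofIsPerfPair : RightSerreFunctor k A where
  F := serreFunctor η
  additive := inferInstance
  η X Y := (serrePairing η X Y).toPerfPair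
  nat_left f h g :=
    ((congrArg (η _) (Category.assoc f h g)).trans (trace_comp_serreMap η f (h ≫ g)).symm).trans
      (congrArg (η _) (Category.assoc h g _))
  nat_right h g g' := congrArg (η _) (Category.assoc h g g')

end CategoryTheory

open CategoryTheory in
/-- Given the action of `F` on objects and linear maps `η_X : Hom(X, FX) → k` such that
the pairings `Hom(X,Y) × Hom(Y,FX) → k`, `(f,g) ↦ η_X (f ≫ g)` are non-degenerate,
`F` extends uniquely to a functor (with `F.map f` characterized by
`η_X (f ≫ g) = η_Y (g ≫ F.map f)`), and this yields a right Serre functor whose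
isomorphisms `η_{X,Y}` are induced by the pairings. -/
theorem rightSerreFunctor_of_trace (k : Type) [Field k] (A : Type)
    [Category A] [Preadditive A] [Linear k A]
    (hfin : ∀ X Y : A, FiniteDimensional k (X ⟶ Y))
    (Fobj : A → A) (η : ∀ X : A, (X ⟶ Fobj X) →ₗ[k] k)
    (hnd₁ : ∀ (X Y : A) (f : X ⟶ Y), f ≠ 0 → ∃ g : Y ⟶ Fobj X, η X (f ≫ g) ≠ 0)
    (hnd₂ : ∀ (X Y : A) (g : Y ⟶ Fobj X), g ≠ 0 → ∃ f : X ⟶ Y, η X (f ≫ g) ≠ 0) :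
    ∃ (S : RightSerreFunctor k A) (hF : ∀ X : A, S.F.obj X = Fobj X),
      (∀ (X Y : A) (f : X ⟶ Y) (g : Y ⟶ Fobj X),
        η X (f ≫ g) =
          η Y (g ≫ eqToHom (hF X).symm ≫ S.F.map f ≫ eqToHom (hF Y))) ∧
      (∀ (X Y : A) (f : X ⟶ Y) (g : Y ⟶ Fobj X),
        S.η X Y f (g ≫ eqToHom (hF X).symm) = η X (f ≫ g)) ∧
      (∀ (Fmap : ∀ X Y : A, (X ⟶ Y) → (Fobj X ⟶ Fobj Y)),
        (∀ (X Y : A) (f : X ⟶ Y) (g : Y ⟶ Fobj X),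
          η X (f ≫ g) = η Y (g ≫ Fmap X Y f)) →
        ∀ (X Y : A) (f : X ⟶ Y),
          Fmap X Y f = eqToHom (hF X).symm ≫ S.F.map f ≫ eqToHom (hF Y)) := by
  have : ∀ X Y : A, (serrePairing η X Y).IsPerfPair := fun X Y =>
    have := hfin X Y
    isPerfPair_serrePairing η (hnd₁ X Y) (hnd₂ X Y)
  refine ⟨RightSerreFunctor.ofIsPerfPair η, fun _ => rfl, ?_, ?_, ?_⟩ <;>
    simp only [eqToHom_refl, Category.comp_id, Category.id_comp]
  · exact fun X Y f g => (trace_comp_serreMap η f g).symm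
  · exact fun X Y f g => rfl
  · exact fun Fmap hFmap X Y f => eq_serreMap η fun g => (hFmap X Y f g).symm
end
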